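/- If two simple qq-characters χ₁, χ₂ are mutually generic (no Y-variable occurring in any monomial of χ₁ occurs in any monomial of χ₂), then for all m∈χ₁, n∈χ₂ the relative pairing vanishes: (m,n)_{m₀,n₀} = 0, and consequently the combinatorial fusion coincides with the ordinary product, χ₁*χ₂ = χ₁χ₂. -/

import Mathlib

/-! Statement 6: if two simple qq-characters are mutually generic then all relative pairings
vanish, and consequently the combinatorial fusion coincides with the ordinary product.

Setup as in the definition of combinatorial fusion.  The two characters are
`χ₁ = Σ_{a ∈ A₁} m₀ Π_j A_{i_j,σ_j}^{a_j}` and `χ₂ = Σ_{b ∈ A₂} n₀ Π_j A_{i_j,σ_j}^{b_j}`;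
the hypotheses `hkey₁`, `hkey₂` are the key property of affine-root expressions: if `A_{i_j,σ_j}`
appears in a monomial of the character then some monomial of the character contains
`Y_{i_j,σ_j q}` and some contains `Y_{i_j,σ_j q^{-1}}`. -/

abbrev YMon (I Γ : Type*) : Type _ := (I × Γ) →₀ ℤ

noncomputable def lcon {I Γ : Type*} [DecidableEq I] [AddCommGroup Γ]
    (q : Γ) (i : I) (σ₀ : Γ) (m : YMon I Γ) : Γ →₀ ℤ :=
  m.sum fun p c =>
    c • (if p.1 = i then Finsupp.single (q + p.2 - σ₀) 1 - Finsupp.single (-q + p.2 - σ₀) 1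
         else 0)

noncomputable def rcon {I Γ : Type*} [DecidableEq I] [AddCommGroup Γ]
    (q : Γ) (i : I) (σ₀ : Γ) (m : YMon I Γ) : Γ →₀ ℤ :=
  m.sum fun p c =>
    c • (if p.1 = i then -(Finsupp.single (q + σ₀ - p.2) 1 - Finsupp.single (-q + σ₀ - p.2) 1)
         else 0)

noncomputable def affRoot {I Γ : Type*} [Fintype I] [AddCommGroup Γ]
    (σm : I → I → Γ) (j : I) (τ : Γ) : YMon I Γ :=
  ∑ i : I, (Finsupp.single (i, σm i j + τ) (1 : ℤ) - Finsupp.single (i, -σm i j + τ) 1)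

noncomputable def monoOf {I Γ J : Type*} [Fintype I] [Fintype J] [AddCommGroup Γ]
    (σm : I → I → Γ) (idx : J → I) (sh : J → Γ) (x0 : YMon I Γ) (c : J → ℤ) : YMon I Γ :=
  x0 + ∑ j : J, c j • affRoot σm (idx j) (sh j)

/-- The relative pairing `(m,n)_{m₀,n₀}`. -/
noncomputable def pairing {I Γ J : Type*} [Fintype I] [DecidableEq I] [Fintype J]
    [AddCommGroup Γ]
    (q : Γ) (σm : I → I → Γ) (idx : J → I) (sh : J → Γ) (m0 n0 : YMon I Γ)
    (a b : J → ℤ) : ℤ :=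
  (∑ j : J,
      (a j • lcon q (idx j) (sh j) n0
        + b j • rcon q (idx j) (sh j) (monoOf σm idx sh m0 a))) 0

/-! At the constant term, both contractions with an affine root `A_{i,σ}` measure the exponent of
`Y_{i,σq^{-1}}` minus that of `Y_{i,σq}` in the other monomial. By the key property these
variables occur in the character carrying `A_{i,σ}`, so by genericity they are absent from every
monomial of the other character, and each term of the pairing vanishes. -/

lemma Finsupp.sum_smul_apply_eq_sub {α β R : Type*} [DecidableEq α] [Ring R] (m : α →₀ R)
    (f : α → β →₀ R) (x : β) (u v : α)
    (hf : ∀ p, f p x = (if p = u then 1 else 0) - (if p = v then 1 else 0)) :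
    (m.sum fun p c => c • f p) x = m u - m v := by
  simp only [Finsupp.sum_apply, Finsupp.smul_apply, hf, smul_eq_mul, mul_sub, mul_ite, mul_one,
    mul_zero, Finsupp.sum_sub, Finsupp.sum_ite_self_eq']

section Contraction

variable {I Γ : Type*} [DecidableEq I] [AddCommGroup Γ]

lemma lcon_apply_zero (q : Γ) (i : I) (σ₀ : Γ) (m : YMon I Γ) :
    lcon q i σ₀ m 0 = m (i, -q + σ₀) - m (i, q + σ₀) := by
  classical
  refine Finsupp.sum_smul_apply_eq_sub m _ 0 _ _ fun ⟨k, τ⟩ => ?_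
  by_cases hk : k = i
  · subst hk
    have h₁ : q + τ - σ₀ = 0 ↔ τ = -q + σ₀ := by rw [sub_eq_zero, eq_neg_add_iff_add_eq]
    have h₂ : -q + τ - σ₀ = 0 ↔ τ = q + σ₀ := by rw [sub_eq_zero, neg_add_eq_iff_eq_add]
    simp [Finsupp.single_apply, h₁, h₂]
  · simp [hk]

lemma rcon_apply_zero (q : Γ) (i : I) (σ₀ : Γ) (m : YMon I Γ) :
    rcon q i σ₀ m 0 = m (i, -q + σ₀) - m (i, q + σ₀) := by
  classical
  refine Finsupp.sum_smul_apply_eq_sub m _ 0 _ _ fun ⟨k, τ⟩ => ?_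
  by_cases hk : k = i
  · subst hk
    simp [Finsupp.single_apply, sub_eq_zero, eq_comm]
  · simp [hk]

end Contraction

lemma pairing_eq_zero_of_apply_eq_zero {I Γ J : Type*} [Fintype I] [DecidableEq I] [Fintype J]
    [AddCommGroup Γ] {q : Γ} {σm : I → I → Γ} {idx : J → I} {sh : J → Γ} {m0 n0 : YMon I Γ}
    {a b : J → ℤ}
    (ha : ∀ j, a j ≠ 0 → n0 (idx j, q + sh j) = 0 ∧ n0 (idx j, -q + sh j) = 0)
    (hb : ∀ j, b j ≠ 0 → monoOf σm idx sh m0 a (idx j, q + sh j) = 0 ∧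
      monoOf σm idx sh m0 a (idx j, -q + sh j) = 0) :
    pairing q σm idx sh m0 n0 a b = 0 := by
  rw [pairing, Finsupp.finsetSum_apply]
  refine Finset.sum_eq_zero fun j _ => ?_
  rw [Finsupp.add_apply, Finsupp.smul_apply, Finsupp.smul_apply, lcon_apply_zero,
    rcon_apply_zero]
  have hl : a j • (n0 (idx j, -q + sh j) - n0 (idx j, q + sh j)) = 0 := by
    by_cases h : a j = 0
    · rw [h, zero_smul]
    · rw [(ha j h).1, (ha j h).2, sub_self, smul_zero]
  have hr : b j • (monoOf σm idx sh m0 a (idx j, -q + sh j)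
      - monoOf σm idx sh m0 a (idx j, q + sh j)) = 0 := by
    by_cases h : b j = 0
    · rw [h, zero_smul]
    · rw [(hb j h).1, (hb j h).2, sub_self, smul_zero]
  rw [hl, hr, add_zero]

open Classical in
theorem statement6_general {I Γ J : Type*} [Fintype I] [DecidableEq I] [Fintype J] [AddCommGroup Γ]
    (q : Γ) (σm : I → I → Γ)
    (idx : J → I) (sh : J → Γ) (m0 n0 : YMon I Γ)
    (A₁ A₂ : Finset (J → ℤ)) (h02 : 0 ∈ A₂)
    -- mutual genericity: no Y-variable of a monomial of χ₁ occurs in a monomial of χ₂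
    (hgen : ∀ a ∈ A₁, ∀ b ∈ A₂,
      Disjoint (monoOf σm idx sh m0 a).support (monoOf σm idx sh n0 b).support)
    -- if A_{i_j,σ_j} occurs in χ₁ then χ₁ contains Y_{i_j, σ_j q^{±1}}
    (hkey₁ : ∀ j : J, (∃ a ∈ A₁, a j ≠ 0) →
      (∃ a ∈ A₁, (idx j, q + sh j) ∈ (monoOf σm idx sh m0 a).support) ∧
      (∃ a ∈ A₁, (idx j, -q + sh j) ∈ (monoOf σm idx sh m0 a).support))
    (hkey₂ : ∀ j : J, (∃ b ∈ A₂, b j ≠ 0) →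
      (∃ b ∈ A₂, (idx j, q + sh j) ∈ (monoOf σm idx sh n0 b).support) ∧
      (∃ b ∈ A₂, (idx j, -q + sh j) ∈ (monoOf σm idx sh n0 b).support)) :
    (∀ a ∈ A₁, ∀ b ∈ A₂, pairing q σm idx sh m0 n0 a b = 0) ∧
    (∑ p ∈ (A₁ ×ˢ A₂).filter
        (fun p => ∀ p' ∈ A₁ ×ˢ A₂,
          pairing q σm idx sh m0 n0 p'.1 p'.2 ≤ pairing q σm idx sh m0 n0 p.1 p.2),
        Finsupp.single (monoOf σm idx sh m0 p.1 + monoOf σm idx sh n0 p.2) (1 : ℤ)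
      = ∑ p ∈ A₁ ×ˢ A₂,
          Finsupp.single (monoOf σm idx sh m0 p.1 + monoOf σm idx sh n0 p.2) (1 : ℤ)) := by
  have absent₂ : ∀ b ∈ A₂, ∀ x, (∃ a ∈ A₁, x ∈ (monoOf σm idx sh m0 a).support) →
      monoOf σm idx sh n0 b x = 0 := fun b hb x ⟨a, ha, hx⟩ =>
    Finsupp.notMem_support_iff.mp (Finset.disjoint_left.mp (hgen a ha b hb) hx)
  have absent₁ : ∀ a ∈ A₁, ∀ x, (∃ b ∈ A₂, x ∈ (monoOf σm idx sh n0 b).support) →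
      monoOf σm idx sh m0 a x = 0 := fun a ha x ⟨b, hb, hx⟩ =>
    Finsupp.notMem_support_iff.mp (Finset.disjoint_right.mp (hgen a ha b hb) hx)
  have hn0 : monoOf σm idx sh n0 0 = n0 := by simp [monoOf]
  have hpair : ∀ a ∈ A₁, ∀ b ∈ A₂, pairing q σm idx sh m0 n0 a b = 0 := by
    intro a ha b hb
    refine pairing_eq_zero_of_apply_eq_zero (fun j hj => ?_) (fun j hj => ?_)
    · obtain ⟨hplus, hminus⟩ := hkey₁ j ⟨a, ha, hj⟩
      rw [← hn0]
      exact ⟨absent₂ 0 h02 _ hplus, absent₂ 0 h02 _ hminus⟩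
    · obtain ⟨hplus, hminus⟩ := hkey₂ j ⟨b, hb, hj⟩
      exact ⟨absent₁ a ha _ hplus, absent₁ a ha _ hminus⟩
  refine ⟨hpair, ?_⟩
  congr 1
  -- `(_)`: unify the decidability instance with the classical one of the statement
  refine @Finset.filter_true_of_mem _ _ (_) _ fun p hp p' hp' => ?_
  obtain ⟨hp₁, hp₂⟩ := Finset.mem_product.mp hp
  obtain ⟨hp₁', hp₂'⟩ := Finset.mem_product.mp hp'
  rw [hpair _ hp₁ _ hp₂, hpair _ hp₁' _ hp₂']

open Classical in
theorem statement6 {I Γ J : Type*} [Fintype I] [DecidableEq I] [Fintype J] [AddCommGroup Γ]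
    (q : Γ) (σm : I → I → Γ)
    (hsym : ∀ i j, σm i j = σm j i) (hdiag : ∀ i, σm i i = q)
    (idx : J → I) (sh : J → Γ) (m0 n0 : YMon I Γ)
    (A₁ A₂ : Finset (J → ℤ)) (h01 : 0 ∈ A₁) (h02 : 0 ∈ A₂)
    -- mutual genericity: no Y-variable of a monomial of χ₁ occurs in a monomial of χ₂
    (hgen : ∀ a ∈ A₁, ∀ b ∈ A₂,
      Disjoint (monoOf σm idx sh m0 a).support (monoOf σm idx sh n0 b).support)
    -- if A_{i_j,σ_j} occurs in χ₁ then χ₁ contains Y_{i_j, σ_j q^{±1}}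
    (hkey₁ : ∀ j : J, (∃ a ∈ A₁, a j ≠ 0) →
      (∃ a ∈ A₁, (idx j, q + sh j) ∈ (monoOf σm idx sh m0 a).support) ∧
      (∃ a ∈ A₁, (idx j, -q + sh j) ∈ (monoOf σm idx sh m0 a).support))
    (hkey₂ : ∀ j : J, (∃ b ∈ A₂, b j ≠ 0) →
      (∃ b ∈ A₂, (idx j, q + sh j) ∈ (monoOf σm idx sh n0 b).support) ∧
      (∃ b ∈ A₂, (idx j, -q + sh j) ∈ (monoOf σm idx sh n0 b).support)) :
    (∀ a ∈ A₁, ∀ b ∈ A₂, pairing q σm idx sh m0 n0 a b = 0) ∧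
    (∑ p ∈ (A₁ ×ˢ A₂).filter
        (fun p => ∀ p' ∈ A₁ ×ˢ A₂,
          pairing q σm idx sh m0 n0 p'.1 p'.2 ≤ pairing q σm idx sh m0 n0 p.1 p.2),
        Finsupp.single (monoOf σm idx sh m0 p.1 + monoOf σm idx sh n0 p.2) (1 : ℤ)
      = ∑ p ∈ A₁ ×ˢ A₂,
          Finsupp.single (monoOf σm idx sh m0 p.1 + monoOf σm idx sh n0 p.2) (1 : ℤ)) :=
  statement6_general q σm idx sh m0 n0 A₁ A₂ h02 hgen hkey₁ hkey₂
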